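/- For real a > 0, b > 0 the Fourier transform of f(t) = e^{-a²t²}/(t²+b²) is given by f̂(w) = (π/(2b)) e^{a²b²} ( e^{2πbw} erfc(ab + πw/a) + e^{-2πbw} erfc(ab - πw/a) ). -/

import Mathlib

/-!
Since `1 / (t² + b²)` is `π / b` times the Fourier transform of `e^{-2πb|s|}`, self-adjointness
of the Fourier transform on `L¹(ℝ)` moves the transform onto the modulated Gaussian
`e^{-a²t²} e^{2πitw}`, whose transform is the Gaussian `(√π/a) e^{-(π/a)²(s-w)²}`. What is
left is the integral of `e^{-2πb|s|}` against this Gaussian; on each half-line, completing the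
square turns it into a tail integral of `e^{-u²}`, i.e. an `erfc` value.
-/

noncomputable section
open Complex Real MeasureTheory

def erfc (x : ℝ) : ℝ := 2 / Real.sqrt π * ∫ u in Set.Ioi x, Real.exp (-u ^ 2)

open Set FourierTransform

theorem integral_fourier_mul_eq_integral_mul_fourier {f g : ℝ → ℂ} (hf : Integrable f)
    (hg : Integrable g) : ∫ ξ, 𝓕 f ξ * g ξ = ∫ x, f x * 𝓕 g x := by
  have := VectorFourier.integral_fourierIntegral_smul_eq_flip (L := innerₗ ℝ)
      Real.continuous_fourierChar continuous_inner hf hg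
  simp only [smul_eq_mul] at this
  rw [show 𝓕 f = VectorFourier.fourierIntegral 𝐞 volume (innerₗ ℝ) f from rfl, this]
  congr with x
  rw [Real.fourier_real_eq, VectorFourier.fourierIntegral]
  congr with ξ

theorem integrable_exp_neg_mul_abs {c : ℝ} (hc : 0 < c) :
    Integrable fun s : ℝ => Real.exp (-c * |s|) := by
  have int_Ioi : IntegrableOn (fun s : ℝ => Real.exp (-c * |s|)) (Ioi 0) :=
    (integrableOn_exp_mul_Ioi (neg_neg_of_pos hc) 0).congr_fun
      (fun s hs => by simp only [abs_of_pos (mem_Ioi.mp hs)]) measurableSet_Ioi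
  have int_Iic : IntegrableOn (fun s : ℝ => Real.exp (-c * |s|)) (Iic 0) :=
    (integrableOn_exp_mul_Iic hc 0).congr_fun
      (fun s hs => by simp only [abs_of_nonpos (mem_Iic.mp hs)]; ring_nf) measurableSet_Iic
  simpa using int_Iic.union int_Ioi

theorem fourier_exp_neg_mul_abs {c : ℝ} (hc : 0 < c) (ξ : ℝ) :
    𝓕 (fun s : ℝ => (Real.exp (-c * |s|) : ℂ)) ξ
      = ((2 * c / (c ^ 2 + (2 * π * ξ) ^ 2) : ℝ) : ℂ) := by
  have re_neg : (-(c + 2 * π * ξ * I) : ℂ).re < 0 := by simpa using hc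
  have re_pos : 0 < (c - 2 * π * ξ * I : ℂ).re := by simpa using hc
  set F := fun s : ℝ => cexp (↑(-2 * π * s * ξ) * I) • (Real.exp (-c * |s|) : ℂ)
  have F_Ioi : EqOn (fun s : ℝ => cexp (-(c + 2 * π * ξ * I) * s)) F (Ioi 0) := fun s hs => by
    simp only [F, abs_of_pos (mem_Ioi.mp hs), smul_eq_mul, ofReal_exp, ← Complex.exp_add]
    push_cast
    ring_nf
  have F_Iic : EqOn (fun s : ℝ => cexp ((c - 2 * π * ξ * I) * s)) F (Iic 0) := fun s hs => by
    simp only [F, abs_of_nonpos (mem_Iic.mp hs), smul_eq_mul, ofReal_exp, ← Complex.exp_add]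
    push_cast
    ring_nf
  rw [Real.fourier_real_eq_integral_exp_smul,
    ← intervalIntegral.integral_Iic_add_Ioi
      ((integrableOn_exp_mul_complex_Iic re_pos 0).congr_fun F_Iic measurableSet_Iic)
      ((integrableOn_exp_mul_complex_Ioi re_neg 0).congr_fun F_Ioi measurableSet_Ioi),
    ← setIntegral_congr_fun measurableSet_Iic F_Iic,
    ← setIntegral_congr_fun measurableSet_Ioi F_Ioi,
    integral_exp_mul_complex_Iic re_pos, integral_exp_mul_complex_Ioi re_neg]
  have h1 : (c - 2 * π * ξ * I : ℂ) ≠ 0 := fun h => by simpa [hc.ne'] using congrArg re h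
  have h2 : (c + 2 * π * ξ * I : ℂ) ≠ 0 := fun h => by simpa [hc.ne'] using congrArg re h
  have conj_mul_self :
      (c - 2 * π * ξ * I) * (c + 2 * π * ξ * I) = (c : ℂ) ^ 2 + (2 * π * ξ) ^ 2 := by
    linear_combination (-(2 * π * ξ) ^ 2 : ℂ) * I_sq
  simp only [ofReal_zero, mul_zero, Complex.exp_zero]
  push_cast
  rw [← conj_mul_self]
  field_simp
  ring

theorem inv_sq_add_sq_eq_fourier_exp_neg_abs {b : ℝ} (hb : 0 < b) (t : ℝ) :
    (((t ^ 2 + b ^ 2)⁻¹ : ℝ) : ℂ)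
      = ((π / b : ℝ) : ℂ) * 𝓕 (fun s : ℝ => (Real.exp (-(2 * π * b) * |s|) : ℂ)) t := by
  rw [fourier_exp_neg_mul_abs (by positivity), ← ofReal_mul]
  congr 1
  field_simp
  ring

theorem integrable_exp_neg_sq_mul_cexp {a : ℝ} (ha : 0 < a) (w : ℝ) :
    Integrable fun t : ℝ => (Real.exp (-(a ^ 2 * t ^ 2)) : ℂ) * cexp (2 * π * I * t * w) := by
  have ha2 : 0 < ((a : ℂ) ^ 2).re := by rw [← ofReal_pow, ofReal_re]; positivity
  refine (integrable_cexp_quadratic ha2 (2 * π * I * w) 0).congr (ae_of_all _ fun t => ?_)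
  simp only [ofReal_exp, ← Complex.exp_add]
  push_cast
  ring_nf

theorem fourier_exp_neg_sq_mul_cexp {a : ℝ} (ha : 0 < a) (w ξ : ℝ) :
    𝓕 (fun t : ℝ => (Real.exp (-(a ^ 2 * t ^ 2)) : ℂ) * cexp (2 * π * I * t * w)) ξ
      = ((√π / a * Real.exp (-(π / a) ^ 2 * (ξ - w) ^ 2) : ℝ) : ℂ) := by
  have integrand (t : ℝ) : cexp (↑(-2 * π * t * ξ) * I) •
        ((Real.exp (-(a ^ 2 * t ^ 2)) : ℂ) * cexp (2 * π * I * t * w))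
      = cexp (I * ↑(2 * π * (w - ξ)) * t) * cexp (-(a ^ 2 : ℂ) * t ^ 2) := by
    simp only [smul_eq_mul, ofReal_exp, ← Complex.exp_add]
    push_cast
    ring_nf
  have sqrt_eq : ((π / a ^ 2 : ℝ) : ℂ) ^ (1 / 2 : ℂ) = ((√π / a : ℝ) : ℂ) := by
    rw [show (1 / 2 : ℂ) = ((1 / 2 : ℝ) : ℂ) by norm_num, ← ofReal_cpow (by positivity),
      ← Real.sqrt_eq_rpow, Real.sqrt_div' _ (sq_nonneg a), Real.sqrt_sq ha.le]
  rw [Real.fourier_real_eq_integral_exp_smul]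
  simp_rw [integrand]
  have ha2 : 0 < ((a : ℂ) ^ 2).re := by rw [← ofReal_pow, ofReal_re]; positivity
  rw [fourierIntegral_gaussian ha2, ← ofReal_pow, ← ofReal_div, sqrt_eq]
  have : (a : ℂ) ≠ 0 := by exact_mod_cast ha.ne'
  push_cast
  field_simp
  ring_nf

theorem integral_comp_add_right_Ioi {E : Type*} [NormedAddCommGroup E] [NormedSpace ℝ E]
    (g : ℝ → E) (r d : ℝ) : ∫ x in Ioi r, g (x + d) = ∫ x in Ioi (r + d), g x := by
  rw [← integral_indicator measurableSet_Ioi, ← integral_indicator measurableSet_Ioi,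
    ← integral_add_right_eq_self ((Ioi (r + d)).indicator g) d]
  congr with x
  simp [indicator_apply]

theorem integrable_exp_neg_sq_mul_add {k : ℝ} (hk : 0 < k) (β : ℝ) :
    Integrable fun y : ℝ => Real.exp (-(k * y + β) ^ 2) := by
  simpa using ((integrable_exp_neg_mul_sq one_pos).comp_add_right β).comp_mul_left' hk.ne'

theorem integral_Ioi_exp_neg_sq_mul_add {k : ℝ} (hk : 0 < k) (β r : ℝ) :
    ∫ y in Ioi r, Real.exp (-(k * y + β) ^ 2) = √π / (2 * k) * erfc (k * r + β) := by
  rw [integral_comp_mul_left_Ioi (fun u => Real.exp (-(u + β) ^ 2)) r hk,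
    integral_comp_add_right_Ioi (fun u => Real.exp (-u ^ 2)), erfc, smul_eq_mul]
  field_simp

theorem exp_neg_mul_mul_exp_neg_sq_eq {k : ℝ} (hk : k ≠ 0) (c w y : ℝ) :
    Real.exp (-c * y) * Real.exp (-k ^ 2 * (y - w) ^ 2)
      = Real.exp (c ^ 2 / (4 * k ^ 2) - c * w)
        * Real.exp (-(k * y + (c / (2 * k) - k * w)) ^ 2) := by
  rw [← Real.exp_add, ← Real.exp_add]
  congr 1
  field_simp
  ring

theorem integrable_exp_neg_mul_mul_exp_neg_sq {k : ℝ} (hk : 0 < k) (c w : ℝ) :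
    Integrable fun y => Real.exp (-c * y) * Real.exp (-k ^ 2 * (y - w) ^ 2) := by
  simp_rw [exp_neg_mul_mul_exp_neg_sq_eq hk.ne']
  exact (integrable_exp_neg_sq_mul_add hk _).const_mul _

theorem integral_Ioi_exp_neg_mul_mul_exp_neg_sq {k : ℝ} (hk : 0 < k) (c w : ℝ) :
    ∫ y in Ioi 0, Real.exp (-c * y) * Real.exp (-k ^ 2 * (y - w) ^ 2)
      = √π / (2 * k) * Real.exp (c ^ 2 / (4 * k ^ 2) - c * w) * erfc (c / (2 * k) - k * w) := by
  simp_rw [exp_neg_mul_mul_exp_neg_sq_eq hk.ne']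
  rw [integral_const_mul, integral_Ioi_exp_neg_sq_mul_add hk, mul_zero, zero_add]
  ring

theorem integral_exp_neg_mul_abs_mul_exp_neg_sq {k : ℝ} (hk : 0 < k) (c w : ℝ) :
    ∫ y, Real.exp (-c * |y|) * Real.exp (-k ^ 2 * (y - w) ^ 2)
      = √π / (2 * k) * Real.exp (c ^ 2 / (4 * k ^ 2))
        * (Real.exp (c * w) * erfc (c / (2 * k) + k * w)
          + Real.exp (-(c * w)) * erfc (c / (2 * k) - k * w)) := by
  set f := fun y => Real.exp (-c * |y|) * Real.exp (-k ^ 2 * (y - w) ^ 2)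
  have f_Ioi : EqOn f (fun y => Real.exp (-c * y) * Real.exp (-k ^ 2 * (y - w) ^ 2)) (Ioi 0) :=
    fun y hy => by simp only [f, abs_of_pos (mem_Ioi.mp hy)]
  have f_neg_Ioi : EqOn (fun y => f (-y))
      (fun y => Real.exp (-c * y) * Real.exp (-k ^ 2 * (y - -w) ^ 2)) (Ioi 0) :=
    fun y hy => by simp only [f, abs_neg, abs_of_pos (mem_Ioi.mp hy)]; ring_nf
  have int_Ioi : IntegrableOn f (Ioi 0) :=
    (integrable_exp_neg_mul_mul_exp_neg_sq hk c w).integrableOn.congr_fun f_Ioi.symm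
      measurableSet_Ioi
  have int_Iic : IntegrableOn f (Iic 0) := by
    have := (integrable_exp_neg_mul_mul_exp_neg_sq hk c (-w)).integrableOn.congr_fun
      f_neg_Ioi.symm measurableSet_Ioi
    rw [← neg_zero] at this
    simpa using Iff.mpr integrableOn_Iic_iff_integrableOn_Iio this.comp_neg_Iio
  rw [← intervalIntegral.integral_Iic_add_Ioi int_Iic int_Ioi, ← neg_zero,
    ← integral_comp_neg_Ioi, setIntegral_congr_fun measurableSet_Ioi f_neg_Ioi,
    integral_Ioi_exp_neg_mul_mul_exp_neg_sq hk, neg_zero,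
    setIntegral_congr_fun measurableSet_Ioi f_Ioi, integral_Ioi_exp_neg_mul_mul_exp_neg_sq hk]
  simp only [mul_neg, sub_neg_eq_add, Real.exp_add, Real.exp_sub, Real.exp_neg]
  ring

/-- The Fourier transform of `f(t) = e^{-a²t²}/(t²+b²)` equals
`(π/(2b)) e^{a²b²} (e^{2πbw} erfc(ab + πw/a) + e^{-2πbw} erfc(ab - πw/a))`. -/
theorem fourier_transform_gaussian_over_quadratic (a b : ℝ) (ha : 0 < a) (hb : 0 < b) (w : ℝ) :
    (∫ t : ℝ, ((Real.exp (-(a ^ 2 * t ^ 2)) / (t ^ 2 + b ^ 2) : ℝ) : ℂ)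
        * Complex.exp (2 * π * I * t * w))
      = ((π / (2 * b) * Real.exp (a ^ 2 * b ^ 2) : ℝ) : ℂ)
          * ((Real.exp (2 * π * b * w) * erfc (a * b + π * w / a)
              + Real.exp (-(2 * π * b * w)) * erfc (a * b - π * w / a) : ℝ) : ℂ) := by
  have integrand (t : ℝ) : ((Real.exp (-(a ^ 2 * t ^ 2)) / (t ^ 2 + b ^ 2) : ℝ) : ℂ)
      * cexp (2 * π * I * t * w)
        = ((π / b : ℝ) : ℂ) * (𝓕 (fun s : ℝ => (Real.exp (-(2 * π * b) * |s|) : ℂ)) t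
          * ((Real.exp (-(a ^ 2 * t ^ 2)) : ℂ) * cexp (2 * π * I * t * w))) := by
    rw [div_eq_mul_inv, ofReal_mul, inv_sq_add_sq_eq_fourier_exp_neg_abs hb]
    ring
  have hL : Integrable fun s : ℝ => (Real.exp (-(2 * π * b) * |s|) : ℂ) :=
    (integrable_exp_neg_mul_abs (by positivity)).ofReal
  simp_rw [integrand]
  rw [integral_const_mul,
    integral_fourier_mul_eq_integral_mul_fourier hL (integrable_exp_neg_sq_mul_cexp ha w)]
  simp_rw [fourier_exp_neg_sq_mul_cexp ha, ← ofReal_mul]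
  rw [integral_complex_ofReal, ← ofReal_mul]
  congr 1
  simp_rw [mul_left_comm _ (√π / a), integral_const_mul]
  rw [integral_exp_neg_mul_abs_mul_exp_neg_sq (by positivity),
    show 2 * π * b / (2 * (π / a)) = a * b by field_simp,
    show (2 * π * b) ^ 2 / (4 * (π / a) ^ 2) = a ^ 2 * b ^ 2 by field_simp; ring,
    show π / a * w = π * w / a by ring]
  field_simp
  rw [Real.sq_sqrt pi_pos.le]
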